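/- Let ψ ≠ 0 be a symmetric trilinear form on ℂ^k. If unit vectors α₁, α₂, α₃ maximize |ψ(u₁,u₂,u₃)| over all triples of unit vectors, then α₁, α₂, α₃ are all equal up to complex phases (their complex span is one-dimensional). -/

import Mathlib

/-!
At a maximizing triple `(x, y, z)` every partial functional attains its norm at a unit vector,
so by Riesz it is a multiple of an inner product: `ψ(x, y, u) = ψ(x, y, z) ⟪z, u⟫`.
Polarizing in the first two slots (`x + c y` for `c = 1, i`, again maximizing) gives
`ψ(x, x, u) = ψ(x, y, z) ⟪y, x⟫ ⟪z, u⟫`, and comparing with the maximizer `(x, z, y)` yields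
`⟪x, y⟫ z = ⟪x, z⟫ y`. Hence the triple is collinear unless it is orthonormal, and an
orthonormal maximizer is impossible: `((x + y)/√2, (x + y)/√2, z)` would be a maximizer
violating the same identity.
-/

open scoped InnerProductSpace ComplexConjugate

section Hilbert
variable {𝕜 E : Type*} [RCLike 𝕜] [NormedAddCommGroup E] [InnerProductSpace 𝕜 E] [CompleteSpace E]

theorem LinearMap.apply_eq_apply_mul_inner_of_norm_apply_eq (L : E →ₗ[𝕜] 𝕜) {C : ℝ}
    (hL : ∀ u, ‖L u‖ ≤ C * ‖u‖) {x : E} (hx : ‖x‖ = 1) (hLx : ‖L x‖ = C) (u : E) :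
    L u = L x * ⟪x, u⟫_𝕜 := by
  set w := (InnerProductSpace.toDual 𝕜 E).symm (L.mkContinuous C hL)
  have hw : ∀ v, ⟪w, v⟫_𝕜 = L v := fun v => by
    simp [w, InnerProductSpace.toDual_symm_apply]
  have hwC : ‖w‖ ≤ C := by
    simpa [w] using L.mkContinuous_norm_le (hLx ▸ norm_nonneg _) hL
  have hcs : ‖⟪x, w⟫_𝕜‖ = ‖x‖ * ‖w‖ := by
    refine le_antisymm (norm_inner_le_norm x w) ?_
    rwa [← inner_conj_symm, RCLike.norm_conj, hw, hLx, hx, one_mul]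
  have hx0 : x ≠ 0 := by rintro rfl; simp at hx
  have hxx : ⟪x, x⟫_𝕜 = 1 := inner_self_eq_one_of_norm_eq_one hx
  have hwx : w = ⟪x, w⟫_𝕜 • x := by
    have := ((norm_inner_eq_norm_tfae 𝕜 x w).out 0 1).1 hcs
    simpa [hx0, hx] using this
  rw [← hw, ← hw x, hwx, inner_smul_left, inner_smul_left, hxx, mul_one]

variable {ι : Type*} [Fintype ι] [DecidableEq ι]

theorem MultilinearMap.apply_update_eq_mul_inner (f : MultilinearMap 𝕜 (fun _ : ι => E) 𝕜)
    {M : ℝ} (hf : ∀ m, ‖f m‖ ≤ M * ∏ i, ‖m i‖) {m : ι → E} (hm : ‖f m‖ = M * ∏ i, ‖m i‖)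
    {i : ι} (hmi : ‖m i‖ = 1) (u : E) :
    f (Function.update m i u) = f m * ⟪m i, u⟫_𝕜 := by
  have hprod : ∀ v, ∏ j, ‖Function.update m i v j‖ = ‖v‖ * ∏ j ∈ {i}ᶜ, ‖m j‖ := fun v => by
    rw [Fintype.prod_eq_mul_prod_compl i, Function.update_self]
    congr 1
    exact Finset.prod_congr rfl fun j hj => by
      rw [Function.update_of_ne (by simpa using hj)]
  have := (f.toLinearMap m i).apply_eq_apply_mul_inner_of_norm_apply_eq
    (C := M * ∏ j ∈ {i}ᶜ, ‖m j‖) (fun v => ?_) hmi ?_ u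
  · simpa using this
  · simpa [hprod, mul_right_comm, mul_assoc] using hf (Function.update m i v)
  · have hmi' := hprod (m i)
    rw [Function.update_eq_self, hmi, one_mul] at hmi'
    simpa [hmi'] using hm
end Hilbert

theorem MultilinearMap.norm_apply_le_of_forall_norm_eq_one {𝕜 ι E G : Type*} [RCLike 𝕜]
    [Fintype ι] [NormedAddCommGroup E] [NormedSpace 𝕜 E] [NormedAddCommGroup G] [NormedSpace 𝕜 G]
    (f : MultilinearMap 𝕜 (fun _ : ι => E) G) {M : ℝ}
    (hf : ∀ m, (∀ i, ‖m i‖ = 1) → ‖f m‖ ≤ M) (m : ι → E) : ‖f m‖ ≤ M * ∏ i, ‖m i‖ := by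
  by_cases h0 : ∃ i, m i = 0
  · obtain ⟨i, hi⟩ := h0
    simp [f.map_coord_zero i hi, Finset.prod_eq_zero (Finset.mem_univ i), hi]
  push Not at h0
  set u : ι → E := fun i => (‖m i‖ : 𝕜)⁻¹ • m i
  have hu : ∀ i, ‖u i‖ = 1 := fun i => by
    simp [u, norm_smul, inv_mul_cancel₀ (norm_ne_zero_iff.2 (h0 i))]
  have hfm : f m = (∏ i, (‖m i‖ : 𝕜)) • f u := by
    rw [← f.map_smul_univ]
    congr 1; ext1 i
    simp [u, smul_inv_smul₀ (show (‖m i‖ : 𝕜) ≠ 0 by simpa using h0 i)]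
  rw [hfm, norm_smul, mul_comm M]
  simp only [norm_prod, RCLike.norm_ofReal, abs_norm]
  gcongr
  exact hf u hu

theorem MultilinearMap.pos_of_norm_apply_le {R ι E G : Type*} [Semiring R] [Fintype ι]
    [NormedAddCommGroup E] [Module R E] [NormedAddCommGroup G] [Module R G]
    {f : MultilinearMap R (fun _ : ι => E) G} (hf0 : f ≠ 0) {M : ℝ}
    (hf : ∀ m, ‖f m‖ ≤ M * ∏ i, ‖m i‖) : 0 < M := by
  by_contra! hM
  refine hf0 (MultilinearMap.ext fun m => norm_le_zero_iff.1 ((hf m).trans ?_))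
  exact mul_nonpos_of_nonpos_of_nonneg hM (by positivity)

namespace MultilinearMap

variable {R E F : Type*} [CommSemiring R] [AddCommMonoid E] [Module R E] [AddCommMonoid F]
  [Module R F]

def IsSymm {ι : Type*} (f : MultilinearMap R (fun _ : ι => E) F) : Prop :=
  ∀ (σ : Equiv.Perm ι) (v : ι → E), f (v ∘ σ) = f v

variable {ψ : MultilinearMap R (fun _ : Fin 3 => E) F}

theorem IsSymm.apply_swap₀₁ (hψ : ψ.IsSymm) (a b c : E) : ψ ![b, a, c] = ψ ![a, b, c] := by
  rw [← hψ (Equiv.swap 0 1)]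
  congr 1; ext i; fin_cases i <;> rfl

theorem IsSymm.apply_swap₁₂ (hψ : ψ.IsSymm) (a b c : E) : ψ ![a, c, b] = ψ ![a, b, c] := by
  rw [← hψ (Equiv.swap 1 2)]
  congr 1; ext i; fin_cases i <;> rfl

theorem IsSymm.apply_add_smul_sq (hψ : ψ.IsSymm) (p q : R) (a b u : E) :
    ψ ![p • a + q • b, p • a + q • b, u] =
      (p * p) • ψ ![a, a, u] + (2 * p * q) • ψ ![a, b, u] + (q * q) • ψ ![b, b, u] := by
  have hfst : ∀ v w, ψ ![p • a + q • b, v, w] = p • ψ ![a, v, w] + q • ψ ![b, v, w] :=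
    fun v w => by
      change ψ (Fin.cons _ ![v, w]) = p • ψ (Fin.cons a ![v, w]) + q • ψ (Fin.cons b ![v, w])
      rw [ψ.cons_add, ψ.cons_smul, ψ.cons_smul]
  have hsnd : ∀ v, ψ ![v, p • a + q • b, u] = p • ψ ![v, a, u] + q • ψ ![v, b, u] := fun v => by
    rw [← hψ.apply_swap₀₁, hfst, hψ.apply_swap₀₁ a, hψ.apply_swap₀₁ b]
  rw [hfst, hsnd, hsnd, hψ.apply_swap₀₁ b a]
  simp only [smul_add, smul_smul, two_mul, add_mul, add_smul, mul_comm q p]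
  abel

end MultilinearMap

theorem MultilinearMap.apply_eq_mul_inner_of_norm_apply_eq {𝕜 E : Type*} [RCLike 𝕜]
    [NormedAddCommGroup E] [InnerProductSpace 𝕜 E] [CompleteSpace E]
    {ψ : MultilinearMap 𝕜 (fun _ : Fin 3 => E) 𝕜} {M : ℝ}
    (hM : ∀ m, ‖ψ m‖ ≤ M * ∏ i, ‖m i‖) {a b z : E} (hz : ‖z‖ = 1)
    (h : ‖ψ ![a, b, z]‖ = M * (‖a‖ * ‖b‖)) (u : E) :
    ψ ![a, b, u] = ψ ![a, b, z] * ⟪z, u⟫_𝕜 := by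
  have hupd : Function.update ![a, b, z] 2 u = ![a, b, u] := by
    ext i; fin_cases i <;> rfl
  rw [← hupd]
  exact ψ.apply_update_eq_mul_inner hM (by simp [Fin.prod_univ_three, h, hz]) hz u

section NormingTriple

variable {E : Type*} [NormedAddCommGroup E] [InnerProductSpace ℂ E]

structure IsNormingTriple (ψ : MultilinearMap ℂ (fun _ : Fin 3 => E) ℂ) (M : ℝ) (x y z : E) :
    Prop where
  norm_fst : ‖x‖ = 1
  norm_snd : ‖y‖ = 1
  norm_thd : ‖z‖ = 1
  norm_apply : ‖ψ ![x, y, z]‖ = M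

namespace IsNormingTriple

variable {ψ : MultilinearMap ℂ (fun _ : Fin 3 => E) ℂ} {M : ℝ} {x y z : E}

theorem swap₀₁ (h : IsNormingTriple ψ M x y z) (hψ : ψ.IsSymm) : IsNormingTriple ψ M y x z :=
  ⟨h.norm_snd, h.norm_fst, h.norm_thd, by rw [hψ.apply_swap₀₁, h.norm_apply]⟩

theorem swap₁₂ (h : IsNormingTriple ψ M x y z) (hψ : ψ.IsSymm) : IsNormingTriple ψ M x z y :=
  ⟨h.norm_fst, h.norm_thd, h.norm_snd, by rw [hψ.apply_swap₁₂, h.norm_apply]⟩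

variable [CompleteSpace E]

theorem apply_eq_mul_inner (h : IsNormingTriple ψ M x y z)
    (hM : ∀ m, ‖ψ m‖ ≤ M * ∏ i, ‖m i‖) (u : E) : ψ ![x, y, u] = ψ ![x, y, z] * ⟪z, u⟫_ℂ :=
  ψ.apply_eq_mul_inner_of_norm_apply_eq hM h.norm_thd
    (by rw [h.norm_apply, h.norm_fst, h.norm_snd, one_mul, mul_one]) u

theorem apply_self_add_sq_mul (h : IsNormingTriple ψ M x y z) (hψ : ψ.IsSymm)
    (hM : ∀ m, ‖ψ m‖ ≤ M * ∏ i, ‖m i‖) {c : ℂ} (hc : ‖c‖ = 1) (u : E) :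
    ψ ![x, x, u] + c ^ 2 * ψ ![y, y, u] =
      ψ ![x, y, z] * (c ^ 2 * ⟪x, y⟫_ℂ + ⟪y, x⟫_ℂ) * ⟪z, u⟫_ℂ := by
  set V := ψ ![x, y, z]
  have hxxz : ψ ![x, x, z] = V * ⟪y, x⟫_ℂ := by
    rw [← hψ.apply_swap₁₂, (h.swap₁₂ hψ).apply_eq_mul_inner hM, hψ.apply_swap₁₂]
  have hyyz : ψ ![y, y, z] = V * ⟪x, y⟫_ℂ := by
    rw [← hψ.apply_swap₁₂, ((h.swap₀₁ hψ).swap₁₂ hψ).apply_eq_mul_inner hM, hψ.apply_swap₁₂,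
      hψ.apply_swap₀₁]
  have hcc : c * conj c = 1 := by
    rw [Complex.mul_conj, Complex.normSq_eq_norm_sq, hc]; norm_num
  -- `(a, a, z)` with `a = x + c y` attains the bound `M ‖a‖²`.
  set a := (1 : ℂ) • x + c • y
  have haa : ⟪a, a⟫_ℂ = 2 + c * ⟪x, y⟫_ℂ + conj c * ⟪y, x⟫_ℂ := by
    simp only [a, inner_add_left, inner_add_right, inner_smul_left, inner_smul_right,
      inner_self_eq_one_of_norm_eq_one h.norm_fst, inner_self_eq_one_of_norm_eq_one h.norm_snd,
      map_one, one_mul]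
    linear_combination hcc
  have haaz : ψ ![a, a, z] = c * V * ⟪a, a⟫_ℂ := by
    simp only [a, hψ.apply_add_smul_sq, smul_eq_mul, hxxz, hyyz]
    rw [haa]
    linear_combination (-V * ⟪y, x⟫_ℂ) * hcc
  have hnorm : ‖ψ ![a, a, z]‖ = M * (‖a‖ * ‖a‖) := by
    rw [haaz, norm_mul, norm_mul, hc, h.norm_apply, inner_self_eq_norm_sq_to_K]
    simp [sq]
  have hxyu := h.apply_eq_mul_inner hM u
  have key := ψ.apply_eq_mul_inner_of_norm_apply_eq hM h.norm_thd hnorm u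
  rw [haaz, haa] at key
  simp only [a, hψ.apply_add_smul_sq, smul_eq_mul, hxyu] at key
  linear_combination key + (V * ⟪y, x⟫_ℂ * ⟪z, u⟫_ℂ) * hcc

theorem apply_self_self (h : IsNormingTriple ψ M x y z) (hψ : ψ.IsSymm)
    (hM : ∀ m, ‖ψ m‖ ≤ M * ∏ i, ‖m i‖) (u : E) :
    ψ ![x, x, u] = ψ ![x, y, z] * ⟪y, x⟫_ℂ * ⟪z, u⟫_ℂ := by
  have h₁ := h.apply_self_add_sq_mul hψ hM (c := 1) (by simp) u
  have hI := h.apply_self_add_sq_mul hψ hM (c := Complex.I) (by simp) u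
  rw [Complex.I_sq] at hI
  linear_combination (h₁ + hI) / 2

theorem inner_smul_eq_inner_smul (h : IsNormingTriple ψ M x y z) (hψ : ψ.IsSymm)
    (hM : ∀ m, ‖ψ m‖ ≤ M * ∏ i, ‖m i‖) (hMpos : 0 < M) : ⟪x, y⟫_ℂ • z = ⟪x, z⟫_ℂ • y := by
  have hV : ψ ![x, y, z] ≠ 0 := norm_ne_zero_iff.1 (h.norm_apply ▸ hMpos.ne')
  refine ext_inner_right ℂ fun u => mul_left_cancel₀ hV ?_
  have h₁ := h.apply_self_self hψ hM u
  have h₂ := (h.swap₁₂ hψ).apply_self_self hψ hM u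
  rw [hψ.apply_swap₁₂ x y z] at h₂
  rw [inner_smul_left, inner_smul_left, inner_conj_symm, inner_conj_symm]
  linear_combination h₂ - h₁

theorem inner_ne_zero (h : IsNormingTriple ψ M x y z) (hψ : ψ.IsSymm)
    (hM : ∀ m, ‖ψ m‖ ≤ M * ∏ i, ‖m i‖) (hMpos : 0 < M) : ⟪x, y⟫_ℂ ≠ 0 := by
  intro hxy
  have hz0 : z ≠ 0 := norm_ne_zero_iff.1 (h.norm_thd ▸ one_ne_zero)
  have hxz : ⟪x, z⟫_ℂ = 0 := by
    have := h.inner_smul_eq_inner_smul hψ hM hMpos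
    rw [hxy, zero_smul, eq_comm, smul_eq_zero] at this
    exact this.resolve_right (norm_ne_zero_iff.1 (h.norm_snd ▸ one_ne_zero))
  have hyz : ⟪y, z⟫_ℂ = 0 := by
    have := (h.swap₀₁ hψ).inner_smul_eq_inner_smul hψ hM hMpos
    rw [inner_eq_zero_symm.1 hxy, zero_smul, eq_comm, smul_eq_zero] at this
    exact this.resolve_right (norm_ne_zero_iff.1 (h.norm_fst ▸ one_ne_zero))
  -- `((x + y) / √2, (x + y) / √2, z)` is then norming, but violates `inner_smul_eq_inner_smul`.
  set r : ℂ := (((√2)⁻¹ : ℝ) : ℂ)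
  have hrr : r * r = 1 / 2 := by
    simp only [r, ← Complex.ofReal_mul, ← mul_inv, Real.mul_self_sqrt zero_le_two]
    norm_num
  set a := r • x + r • y
  have haa : ⟪a, a⟫_ℂ = 1 := by
    simp only [a, inner_add_left, inner_add_right, inner_smul_left, inner_smul_right, hxy,
      inner_eq_zero_symm.1 hxy, inner_self_eq_one_of_norm_eq_one h.norm_fst,
      inner_self_eq_one_of_norm_eq_one h.norm_snd, r, Complex.conj_ofReal]
    linear_combination 2 * hrr
  have haz : ⟪a, z⟫_ℂ = 0 := by simp [a, hxz, hyz]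
  have haaz : ψ ![a, a, z] = ψ ![x, y, z] := by
    simp only [a, hψ.apply_add_smul_sq, smul_eq_mul, h.apply_self_self hψ hM,
      (h.swap₀₁ hψ).apply_self_self hψ hM, hxy, inner_eq_zero_symm.1 hxy]
    linear_combination 2 * ψ ![x, y, z] * hrr
  have ha : IsNormingTriple ψ M a a z := by
    have hna : ‖a‖ = 1 := by rw [norm_eq_sqrt_re_inner (𝕜 := ℂ), haa]; simp
    exact ⟨hna, hna, h.norm_thd, haaz ▸ h.norm_apply⟩
  have := ha.inner_smul_eq_inner_smul hψ hM hMpos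
  rw [haa, haz, one_smul, zero_smul] at this
  exact hz0 this

end IsNormingTriple

end NormingTriple

theorem exists_norm_eq_one_smul_of_smul_eq_smul {𝕜 E : Type*} [NormedField 𝕜]
    [NormedAddCommGroup E] [NormedSpace 𝕜 E] {v w : E} (hv : ‖v‖ = 1) (hw : ‖w‖ = 1)
    {a b : 𝕜} (h : a • v = b • w) (hb : b ≠ 0) : ∃ c : 𝕜, ‖c‖ = 1 ∧ v = c • w := by
  have ha : a ≠ 0 := by
    rintro rfl
    rw [zero_smul, eq_comm, smul_eq_zero] at h
    exact h.elim hb (norm_ne_zero_iff.1 (hw ▸ one_ne_zero))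
  have hv' : v = (a⁻¹ * b) • w := by rw [mul_smul, ← h, inv_smul_smul₀ ha]
  refine ⟨a⁻¹ * b, ?_, hv'⟩
  have := congrArg norm hv'
  rwa [norm_smul, hv, hw, mul_one, eq_comm] at this

theorem stmt_4 (k : ℕ)
    (ψ : MultilinearMap ℂ (fun _ : Fin 3 => EuclideanSpace ℂ (Fin k)) ℂ)
    (hψ : ψ ≠ 0)
    (hsymm : ∀ (σ : Equiv.Perm (Fin 3)) (v : Fin 3 → EuclideanSpace ℂ (Fin k)),
      ψ (v ∘ σ) = ψ v)
    (α : Fin 3 → EuclideanSpace ℂ (Fin k))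
    (hα : ∀ i, ‖α i‖ = 1)
    (hmax : ∀ u : Fin 3 → EuclideanSpace ℂ (Fin k),
      (∀ i, ‖u i‖ = 1) → ‖ψ u‖ ≤ ‖ψ α‖) :
    ∀ i j : Fin 3, ∃ c : ℂ, ‖c‖ = 1 ∧ α i = c • α j := by
  set M := ‖ψ α‖
  have hM : ∀ m, ‖ψ m‖ ≤ M * ∏ i, ‖m i‖ := ψ.norm_apply_le_of_forall_norm_eq_one hmax
  have hMpos : 0 < M := MultilinearMap.pos_of_norm_apply_le hψ hM
  have h : IsNormingTriple ψ M (α 0) (α 1) (α 2) := by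
    refine ⟨hα 0, hα 1, hα 2, ?_⟩
    have hα₃ : ![α 0, α 1, α 2] = α := by ext1 i; fin_cases i <;> rfl
    rw [hα₃]
  have h' := h.swap₀₁ hsymm
  have hphase : ∀ i, ∃ c : ℂ, ‖c‖ = 1 ∧ α i = c • α 2 := by
    intro i
    fin_cases i
    · exact exists_norm_eq_one_smul_of_smul_eq_smul (hα 0) (hα 2)
        (h'.inner_smul_eq_inner_smul hsymm hM hMpos).symm (h'.inner_ne_zero hsymm hM hMpos)
    · exact exists_norm_eq_one_smul_of_smul_eq_smul (hα 1) (hα 2)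
        (h.inner_smul_eq_inner_smul hsymm hM hMpos).symm (h.inner_ne_zero hsymm hM hMpos)
    · exact ⟨1, norm_one, (one_smul ℂ _).symm⟩
  intro i j
  obtain ⟨a, ha, hi⟩ := hphase i
  obtain ⟨b, hb, hj⟩ := hphase j
  have hb0 : b ≠ 0 := norm_ne_zero_iff.1 (hb ▸ one_ne_zero)
  refine ⟨a * b⁻¹, by simp [ha, hb], ?_⟩
  rw [hi, hj, smul_smul, mul_assoc, inv_mul_cancel₀ hb0, mul_one]
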